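/- arXiv:1805.02166 — 2 statements merged into one kernel-verified Lean document; each statement's English description precedes it below -/
import Mathlib

section
/- Let q be a prime power and R = F_q[x]/K a quotient of F_q[x] by a nonzero proper ideal K. Then the Erdős–Burgess constant of the multiplicative semigroup S_R of R satisfies I(S_R) ≥ D(U(S_R)) + Ω(K) − ω(K), where Ω(K) is the number of prime ideals counted with multiplicity and ω(K) the number of distinct prime ideals in the factorization of K. -/
/-! A product-one free sequence `S` of `D - 1` units, followed by `n i - 1` copies of each `p i`,
is idempotent-product free in `F[X] ⧸ (f)`. A subproduct has the form `u * h` with `u` a unit and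
`h = ∏ p i ^ k i`, `k i < n i`. If it is idempotent then `f ∣ h * (1 - w * h)` for a lift `w` of
`u`, and `p i ∤ 1 - w * h` whenever `p i ∣ h`, so `p i ^ n i ∣ h`, which is impossible; hence
`h = 1`, `u` is an idempotent unit, so `u = 1`, contradicting the choice of `S`. -/

/-- A sequence (multiset) over a commutative monoid is idempotent-product free if no nonempty
subsequence has an idempotent product. -/
def IdemProdFree {M : Type*} [CommMonoid M] (T : Multiset M) : Prop :=
  ∀ W ≤ T, W ≠ 0 → ¬ IsIdempotentElem W.prod

/-- The Erdős–Burgess constant of a commutative monoid: the least ℓ ∈ ℕ ∪ {∞} such that every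
sequence of length at least ℓ is not idempotent-product free. -/
noncomputable def ErdosBurgess (M : Type*) [CommMonoid M] : ℕ∞ :=
  sInf {ℓ : ℕ∞ | ∀ T : Multiset M, ℓ ≤ (Multiset.card T : ℕ∞) → ¬ IdemProdFree T}

/-- The Davenport constant of a finite abelian group. -/
noncomputable def Davenport (G : Type*) [CommGroup G] : ℕ :=
  sInf {ℓ : ℕ | ∀ T : Multiset G, ℓ ≤ Multiset.card T →
    ∃ W ≤ T, W ≠ 0 ∧ W.prod = 1}

namespace Multiset

variable {α β : Type*}

theorem exists_eq_add_of_le_add [DecidableEq α] {s t u : Multiset α} (h : u ≤ s + t) :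
    ∃ u₁ ≤ s, ∃ u₂ ≤ t, u = u₁ + u₂ :=
  ⟨u ∩ s, inter_le_right, u - s, by rwa [Multiset.sub_le_iff_le_add, add_comm],
    by rw [add_comm, sub_add_inter]⟩

theorem exists_le_map_eq_of_le_map {f : α → β} {s : Multiset α} {u : Multiset β}
    (h : u ≤ s.map f) : ∃ v ≤ s, v.map f = u := by
  classical
  induction u using Multiset.induction generalizing s with
  | empty => exact ⟨0, zero_le _, rfl⟩
  | cons b u ih =>
    obtain ⟨a, ha, rfl⟩ := mem_map.mp (mem_of_le h (mem_cons_self _ _))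
    have hu : u ≤ (s.erase a).map f := by
      simpa [map_erase_of_mem f s ha] using erase_le_erase (f a) h
    obtain ⟨v, hv, rfl⟩ := ih hu
    exact ⟨a ::ₘ v, (cons_le_cons a hv).trans_eq (cons_erase ha), map_cons f a v⟩

end Multiset

def ProdOneFree {M : Type*} [CommMonoid M] (T : Multiset M) : Prop :=
  ∀ W ≤ T, W ≠ 0 → W.prod ≠ 1

theorem exists_prodOneFree_davenport_sub_one_le_card (G : Type*) [CommGroup G] :
    ∃ S : Multiset G, Davenport G - 1 ≤ Multiset.card S ∧ ProdOneFree S := by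
  rcases Nat.eq_zero_or_pos (Davenport G) with hD | hD
  · exact ⟨0, by omega, fun W hW hW0 => absurd (Multiset.le_zero.mp hW) hW0⟩
  · have := Nat.notMem_of_lt_sInf (Nat.sub_lt hD one_pos)
    simp only [Set.mem_ofPred_eq, not_forall, not_exists, not_and] at this
    obtain ⟨S, hS, hfree⟩ := this
    exact ⟨S, hS, fun W hW hW0 => hfree W hW hW0⟩

theorem card_add_one_le_erdosBurgess {M : Type*} [CommMonoid M] {T : Multiset M}
    (hT : IdemProdFree T) : ((Multiset.card T + 1 : ℕ) : ℕ∞) ≤ ErdosBurgess M := by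
  refine le_sInf fun ℓ hℓ => ?_
  by_contra! hlt
  push_cast at hlt
  exact hℓ T ((ENat.lt_add_one_iff (ENat.natCast_ne_top _)).mp hlt) hT

theorem idemProdFree_map_val_add {M : Type*} [CommMonoid M] {S : Multiset Mˣ}
    {T : Multiset M} (hS : ProdOneFree S)
    (hT : ∀ W ≤ T, ∀ u : Mˣ, IsIdempotentElem (u * W.prod) → W = 0) :
    IdemProdFree (S.map Units.val + T) := by
  classical
  intro W hW hW0 hidem
  obtain ⟨W₁, hW₁, W₂, hW₂, rfl⟩ := Multiset.exists_eq_add_of_le_add hW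
  obtain ⟨V, hV, rfl⟩ := Multiset.exists_le_map_eq_of_le_map hW₁
  have hV_prod : (V.map Units.val).prod = V.prod := (map_multiset_prod (Units.coeHom M) V).symm
  rw [Multiset.prod_add, hV_prod] at hidem
  obtain rfl := hT W₂ hW₂ V.prod hidem
  rw [Multiset.prod_zero, mul_one, IsIdempotentElem.iff_eq_one_of_isUnit V.prod.isUnit] at hidem
  exact hS V hV (by rintro rfl; simp at hW0) (Units.val_eq_one.mp hidem)

section

variable {A : Type*}

theorem le_count_of_pow_dvd_prod_map [CommMonoidWithZero A] [IsCancelMulZero A] {ι : Type*}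
    [DecidableEq ι] {p : ι → A} (hp : ∀ i, Prime (p i)) (hass : Pairwise fun i j => ¬ Associated (p i) (p j))
    {s : Multiset ι} {i : ι} {m : ℕ} (h : p i ^ m ∣ (s.map p).prod) : m ≤ s.count i := by
  induction s using Multiset.induction generalizing m with
  | empty =>
    rw [Multiset.map_zero, Multiset.prod_zero] at h
    cases m with
    | zero => exact le_rfl
    | succ m =>
      exact ((hp i).not_isUnit (isUnit_of_dvd_one ((dvd_pow_self _ m.succ_ne_zero).trans h))).elim
  | cons j s ih =>
    rw [Multiset.map_cons, Multiset.prod_cons] at h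
    by_cases hji : j = i
    · subst hji
      cases m with
      | zero => exact zero_le
      | succ m =>
        rw [pow_succ', mul_dvd_mul_iff_left (hp j).ne_zero] at h
        simpa using ih h
    · rw [Multiset.count_cons_of_ne (Ne.symm hji)]
      refine ih ((hp i).pow_dvd_of_dvd_mul_left m (fun hij => ?_) h)
      exact hass (Ne.symm hji) ((hp i).associated_of_dvd (hp j) hij)

theorem Prime.pow_dvd_of_isIdempotentElem_unit_mul [CommRing A] [IsDomain A] {f p x : A} {n : ℕ}
    (hp : Prime p) (hpf : p ^ n ∣ f) (hpx : p ∣ x) {u : (A ⧸ Ideal.span {f})ˣ}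
    (h : IsIdempotentElem (u * Ideal.Quotient.mk (Ideal.span {f}) x)) : p ^ n ∣ x := by
  obtain ⟨w, hw⟩ := Ideal.Quotient.mk_surjective (u : A ⧸ Ideal.span {f})
  have hsq : (u : A ⧸ Ideal.span {f}) * Ideal.Quotient.mk _ x ^ 2 = Ideal.Quotient.mk _ x :=
    (Units.mul_right_inj u).mp (by linear_combination h.eq)
  have hf : f ∣ x * (1 - w * x) := by
    rw [← Ideal.mem_span_singleton, ← Ideal.Quotient.eq_zero_iff_mem, map_mul, map_sub, map_mul,
      map_one, hw]
    linear_combination -hsq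
  have hp1 : ¬ p ∣ 1 - w * x := fun h1 =>
    hp.not_isUnit (isUnit_of_dvd_one (by simpa using dvd_add h1 (hpx.mul_left w)))
  exact hp.pow_dvd_of_dvd_mul_right n hp1 (hpf.trans hf)

theorem eq_zero_of_le_map_of_isIdempotentElem_unit_mul [CommRing A] [IsDomain A] {ι : Type*}
    [DecidableEq ι] {p : ι → A} (hp : ∀ i, Prime (p i))
    (hass : Pairwise fun i j => ¬ Associated (p i) (p j)) {n : ι → ℕ} {f : A}
    (hf : ∀ i, p i ^ n i ∣ f) {N : Multiset ι} (hN : ∀ i, N.count i < n i)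
    {W : Multiset (A ⧸ Ideal.span {f})} (hW : W ≤ N.map (Ideal.Quotient.mk _ ∘ p))
    {u : (A ⧸ Ideal.span {f})ˣ} (h : IsIdempotentElem (u * W.prod)) : W = 0 := by
  obtain ⟨s, hs, rfl⟩ := Multiset.exists_le_map_eq_of_le_map hW
  rw [← Multiset.map_map, ← map_multiset_prod] at h
  obtain rfl | ⟨i, hi⟩ := s.empty_or_exists_mem
  · rfl
  exfalso
  have hdvd := (hp i).pow_dvd_of_isIdempotentElem_unit_mul (hf i)
    (Multiset.dvd_prod (Multiset.mem_map_of_mem p hi)) h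
  have := (le_count_of_pow_dvd_prod_map hp hass hdvd).trans (Multiset.count_le_of_le i hs)
  exact (hN i).not_ge this

end

theorem erdosBurgess_lower_bound_general
    (F : Type*) [Field F]
    (r : ℕ)
    (p : Fin r → Polynomial F) (n : Fin r → ℕ)
    (hirr : ∀ i, Irreducible (p i))
    (hass : ∀ i j, i ≠ j → ¬ Associated (p i) (p j))
    (hn : ∀ i, 1 ≤ n i)
    (f : Polynomial F) (hf : f = ∏ i, p i ^ n i)
    (K : Ideal (Polynomial F)) (hK : K = Ideal.span {f}) :
    ((Davenport (Polynomial F ⧸ K)ˣ + (∑ i, n i) - r : ℕ) : ℕ∞) ≤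
      ErdosBurgess (Polynomial F ⧸ K) := by
  subst hK
  obtain ⟨S, hS_card, hS⟩ :=
    exists_prodOneFree_davenport_sub_one_le_card (Polynomial F ⧸ Ideal.span {f})ˣ
  set N : Multiset (Fin r) := ∑ i, Multiset.replicate (n i - 1) i
  have hN_count (i : Fin r) : N.count i < n i := by
    simp only [N, Multiset.count_sum', Multiset.count_replicate, Finset.sum_ite_eq',
      Finset.mem_univ, if_true]
    exact Nat.sub_lt (hn i) one_pos
  have hN_card : Multiset.card N + r = ∑ i, n i :=
    calc Multiset.card N + r = ∑ i, (n i - 1 + 1) := by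
          simp [N, Multiset.card_sum, Finset.sum_add_distrib]
      _ = ∑ i, n i := Finset.sum_congr rfl fun i _ => Nat.sub_add_cancel (hn i)
  have hfree := idemProdFree_map_val_add hS fun W hW u hu =>
    eq_zero_of_le_map_of_isIdempotentElem_unit_mul (fun i => (hirr i).prime) hass
      (fun i => hf ▸ Finset.dvd_prod_of_mem _ (Finset.mem_univ i)) hN_count hW hu
  refine le_trans ?_ (card_add_one_le_erdosBurgess hfree)
  rw [Multiset.card_add, Multiset.card_map, Multiset.card_map]
  exact_mod_cast (by omega)

/-- I(S_R) ≥ D(U(S_R)) + Ω(K) - ω(K) for R = F_q[x]/K, K a nonzero proper ideal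
with K = (f), f = ∏ p_i^{n_i}, so Ω(K) = ∑ n_i and ω(K) = r. -/
theorem erdosBurgess_lower_bound
    (F : Type*) [Field F] [Fintype F]
    (r : ℕ) (hr : 1 ≤ r)
    (p : Fin r → Polynomial F) (n : Fin r → ℕ)
    (hirr : ∀ i, Irreducible (p i))
    (hass : ∀ i j, i ≠ j → ¬ Associated (p i) (p j))
    (hn : ∀ i, 1 ≤ n i)
    (f : Polynomial F) (hf : f = ∏ i, p i ^ n i)
    (K : Ideal (Polynomial F)) (hK : K = Ideal.span {f}) :
    ((Davenport (Polynomial F ⧸ K)ˣ + (∑ i, n i) - r : ℕ) : ℕ∞) ≤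
      ErdosBurgess (Polynomial F ⧸ K) :=
  erdosBurgess_lower_bound_general F r p n hirr hass hn f hf K hK
end

section
/- Let q be a prime power and f = p₁p₂···p_r ∈ F_q[x] a product of pairwise non-associate irreducibles (squarefree), and R = F_q[x]/(f). Then every sequence over the multiplicative semigroup S_R of length D(U(S_R)) contains a nonempty subsequence whose product is an idempotent; consequently I(S_R) = D(U(S_R)). -/
/-
A finite reduced commutative ring is von Neumann regular: every `x` satisfies
`x = x² y` for some `y`. Then `e = x y` is idempotent and `x = u e` for the unit `u = x + 1 - e`.
Given a sequence of length `D(Rˣ)`, a nonempty subsequence whose unit parts multiply to `1` has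
as product a product of idempotents, hence an idempotent. Conversely a product-one free sequence
of units of length `D(Rˣ) - 1` has no idempotent subproduct, since the only idempotent unit is `1`.
For `R = F[X]/(f)` with `f` squarefree the ring is finite and reduced.
-/

open Multiset Polynomial

theorem Multiset.exists_le_map_eq_of_le_map_s7 {α β : Type*} {f : α → β} {s : Multiset α}
    {t : Multiset β} (h : t ≤ s.map f) : ∃ u ≤ s, u.map f = t := by
  induction s using Quotient.inductionOn with | h l => ?_
  induction t using Quotient.inductionOn with | h l₁ => ?_
  obtain ⟨l₂, hperm, hsub⟩ := Multiset.coe_le.mp h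
  obtain ⟨l', hl', rfl⟩ := List.sublist_map_iff.mp hsub
  exact ⟨l', Multiset.coe_le.mpr hl'.subperm, Multiset.coe_eq_coe.mpr hperm⟩

theorem List.exists_infix_prod_eq_one {G : Type*} [Group G] [Fintype G] (l : List G)
    (hl : Fintype.card G ≤ l.length) : ∃ w, w <:+: l ∧ w ≠ [] ∧ w.prod = 1 := by
  obtain ⟨i, j, hij, hprod⟩ := Fintype.exists_ne_map_eq_of_card_lt
    (fun k : Fin (Fintype.card G + 1) => (l.take k).prod) (by simp)
  wlog hlt : i < j generalizing i j
  · exact this j i hij.symm hprod.symm (lt_of_le_of_ne (not_lt.mp hlt) hij.symm)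
  have hj : (j : ℕ) ≤ l.length := by omega
  have hsplit : l.take i ++ (l.take j).drop i = l.take j := by
    have hij : (i : ℕ) ≤ j := hlt.le
    simpa [List.take_take, min_eq_left hij] using List.take_append_drop i (l.take j)
  refine ⟨(l.take j).drop i, ⟨l.take i, l.drop j, ?_⟩, ?_, ?_⟩
  · rw [hsplit, List.take_append_drop]
  · rw [← List.length_pos_iff, List.length_drop, List.length_take, min_eq_left hj]
    exact Nat.sub_pos_of_lt hlt
  · have := congrArg List.prod hsplit
    rw [List.prod_append] at this
    exact mul_eq_left.mp (this.trans hprod.symm)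

section Davenport

variable {G : Type*} [CommGroup G]

theorem exists_le_prod_eq_one_of_davenport_le_card [Finite G] {T : Multiset G}
    (hT : Davenport G ≤ card T) : ∃ W ≤ T, W ≠ 0 ∧ W.prod = 1 := by
  have := Fintype.ofFinite G
  have hmem : Davenport G ∈
      {ℓ : ℕ | ∀ T : Multiset G, ℓ ≤ card T → ∃ W ≤ T, W ≠ 0 ∧ W.prod = 1} := by
    refine Nat.sInf_mem ⟨Fintype.card G, fun T hT => ?_⟩
    induction T using Quotient.inductionOn with | h l => ?_
    obtain ⟨w, hwl, hw, hw1⟩ := l.exists_infix_prod_eq_one hT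
    exact ⟨w, Multiset.coe_le.mpr hwl.sublist.subperm, by simpa using hw, by simpa using hw1⟩
  exact hmem T hT

theorem exists_prod_ne_one_of_lt_davenport {ℓ : ℕ} (h : ℓ < Davenport G) :
    ∃ T : Multiset G, ℓ ≤ card T ∧ ∀ W ≤ T, W ≠ 0 → W.prod ≠ 1 := by
  simpa using Nat.notMem_of_lt_sInf h

end Davenport

theorem Units.val_multiset_prod {M : Type*} [CommMonoid M] (s : Multiset Mˣ) :
    ((s.prod : Mˣ) : M) = (s.map Units.val).prod :=
  (s.prod_hom (Units.coeHom M)).symm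

section VonNeumannRegular

variable {R : Type*} [CommRing R]

theorem mul_mul_self_eq_of_pow_succ_mul_eq_pow [IsReduced R] {x y : R} {n : ℕ}
    (h : x ^ (n + 1) * y = x ^ n) : x * x * y = x := by
  have hann : x ^ n * (1 - x * y) = 0 := by linear_combination -h
  have hnil : (x * (1 - x * y)) ^ (n + 1) = 0 := by
    rw [mul_pow]
    linear_combination (x * (1 - x * y) ^ n) * hann
  linear_combination -IsReduced.eq_zero _ ⟨n + 1, hnil⟩

theorem IsArtinianRing.exists_mul_mul_self_eq [IsArtinianRing R] [IsReduced R] (x : R) :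
    ∃ y, x * x * y = x := by
  obtain ⟨n, y, hy⟩ := IsArtinian.exists_pow_succ_smul_dvd x (1 : R)
  exact ⟨y, mul_mul_self_eq_of_pow_succ_mul_eq_pow (by simpa using hy)⟩

theorem exists_unit_mul_isIdempotentElem_of_mul_mul_self_eq {x y : R} (h : x * x * y = x) :
    ∃ (u : Rˣ) (e : R), IsIdempotentElem e ∧ x = u * e := by
  refine ⟨⟨x + 1 - x * y, x * y * y + 1 - x * y, ?_, ?_⟩, x * y, ?_, ?_⟩
  · linear_combination (2 * y - 1 - y ^ 2) * h
  · linear_combination (2 * y - 1 - y ^ 2) * h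
  · show x * y * (x * y) = x * y
    linear_combination y * h
  · show x = (x + 1 - x * y) * (x * y)
    linear_combination (y - 1) * h

theorem IsArtinianRing.exists_unit_mul_isIdempotentElem [IsArtinianRing R] [IsReduced R]
    (x : R) : ∃ (u : Rˣ) (e : R), IsIdempotentElem e ∧ x = u * e :=
  have ⟨_, hy⟩ := exists_mul_mul_self_eq x
  exists_unit_mul_isIdempotentElem_of_mul_mul_self_eq hy

end VonNeumannRegular

section FiniteReducedRing

variable {R : Type*} [CommRing R] [IsReduced R] [Finite R]

theorem exists_le_isIdempotentElem_prod_of_davenport_le_card {T : Multiset R}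
    (hT : Davenport Rˣ ≤ card T) : ∃ W ≤ T, W ≠ 0 ∧ IsIdempotentElem W.prod := by
  have : IsArtinianRing R := isArtinian_of_finite
  choose u e he hue using IsArtinianRing.exists_unit_mul_isIdempotentElem (R := R)
  obtain ⟨V, hVT, hV0, hV1⟩ :=
    exists_le_prod_eq_one_of_davenport_le_card (T := T.map u) (by rwa [card_map])
  obtain ⟨W, hWT, rfl⟩ := exists_le_map_eq_of_le_map_s7 hVT
  refine ⟨W, hWT, by rintro rfl; exact hV0 (map_zero u), ?_⟩
  have hprod : W.prod = (W.map e).prod := calc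
    W.prod = (W.map fun a => (u a : R) * e a).prod := by
      rw [← map_congr rfl fun a _ => hue a, map_id']
    _ = ((W.map u).prod : R) * (W.map e).prod := by
      rw [prod_map_mul, Units.val_multiset_prod, map_map]; rfl
    _ = (W.map e).prod := by rw [hV1, Units.val_one, one_mul]
  rw [hprod]
  exact prod_induction _ _ (fun _ _ => IsIdempotentElem.mul) .one (by simpa using fun a _ => he a)

theorem erdosBurgess_eq_davenport : ErdosBurgess R = Davenport Rˣ := by
  refine le_antisymm (sInf_le fun T hT hfree => ?_) (le_sInf fun ℓ hℓ => ?_)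
  · obtain ⟨W, hWT, hW0, hW⟩ :=
      exists_le_isIdempotentElem_prod_of_davenport_le_card (T := T) (by exact_mod_cast hT)
    exact hfree W hWT hW0 hW
  · by_contra! hlt
    lift ℓ to ℕ using hlt.ne_top
    obtain ⟨U, hU, hUfree⟩ := exists_prod_ne_one_of_lt_davenport (by exact_mod_cast hlt)
    refine hℓ (U.map Units.val) (by simpa using hU) fun W hWU hW0 hW => ?_
    obtain ⟨V, hVU, rfl⟩ := exists_le_map_eq_of_le_map_s7 hWU
    rw [← Units.val_multiset_prod, IsIdempotentElem.iff_eq_one_of_isUnit (Units.isUnit _)] at hW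
    exact hUfree V hVU (by rintro rfl; simp at hW0) (Units.val_eq_one.mp hW)

end FiniteReducedRing

theorem Finset.squarefree_prod_of_pairwise_not_associated {R ι : Type*} [CommMonoidWithZero R]
    [IsCancelMulZero R] [DecompositionMonoid R] (s : Finset ι) {p : ι → R}
    (hirr : ∀ i, Irreducible (p i))
    (hass : ∀ i j, i ≠ j → ¬ Associated (p i) (p j)) : Squarefree (∏ i ∈ s, p i) :=
  s.squarefree_prod_of_pairwise_isCoprime
    (fun i _ j _ hij => (hirr i).isRelPrime_iff_not_dvd.mpr
      fun hdvd => hass i j hij ((hirr i).associated_of_dvd (hirr j) hdvd))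
    fun i _ => (hirr i).squarefree

theorem Polynomial.finite_quotient_span_singleton {K : Type*} [Field K] [Finite K] {f : K[X]}
    (hf : f ≠ 0) : Finite (K[X] ⧸ Ideal.span {f}) :=
  have : Module.Finite K (AdjoinRoot f) := (AdjoinRoot.powerBasis hf).finite
  Module.finite_of_finite K (M := AdjoinRoot f)

theorem erdosBurgess_squarefree_general
    (F : Type*) [Field F] [Fintype F]
    (r : ℕ)
    (p : Fin r → Polynomial F)
    (hirr : ∀ i, Irreducible (p i))
    (hass : ∀ i j, i ≠ j → ¬ Associated (p i) (p j))
    (f : Polynomial F) (hf : f = ∏ i, p i) :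
    (∀ T : Multiset (Polynomial F ⧸ Ideal.span {f}),
      Multiset.card T = Davenport (Polynomial F ⧸ Ideal.span {f})ˣ →
      ∃ W ≤ T, W ≠ 0 ∧ IsIdempotentElem W.prod) ∧
    ErdosBurgess (Polynomial F ⧸ Ideal.span {f}) =
      ((Davenport (Polynomial F ⧸ Ideal.span {f})ˣ : ℕ) : ℕ∞) := by
  have hsq : Squarefree f := hf ▸ Finset.univ.squarefree_prod_of_pairwise_not_associated hirr hass
  have : IsReduced (F[X] ⧸ Ideal.span {f}) :=
    (Ideal.isRadical_iff_quotient_reduced _).mp (isRadical_iff_span_singleton.mp hsq.isRadical)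
  have : Finite (F[X] ⧸ Ideal.span {f}) := finite_quotient_span_singleton hsq.ne_zero
  exact ⟨fun T hT => exists_le_isIdempotentElem_prod_of_davenport_le_card hT.ge,
    erdosBurgess_eq_davenport⟩

/-- for squarefree f = p₁⋯p_r, every sequence over R = F_q[x]/(f) of length
D(U(R)) has a nonempty subsequence with idempotent product, and I(S_R) = D(U(S_R)). -/
theorem erdosBurgess_squarefree
    (F : Type*) [Field F] [Fintype F]
    (r : ℕ) (hr : 1 ≤ r)
    (p : Fin r → Polynomial F)
    (hirr : ∀ i, Irreducible (p i))
    (hass : ∀ i j, i ≠ j → ¬ Associated (p i) (p j))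
    (f : Polynomial F) (hf : f = ∏ i, p i) :
    (∀ T : Multiset (Polynomial F ⧸ Ideal.span {f}),
      Multiset.card T = Davenport (Polynomial F ⧸ Ideal.span {f})ˣ →
      ∃ W ≤ T, W ≠ 0 ∧ IsIdempotentElem W.prod) ∧
    ErdosBurgess (Polynomial F ⧸ Ideal.span {f}) =
      ((Davenport (Polynomial F ⧸ Ideal.span {f})ˣ : ℕ) : ℕ∞) :=
  erdosBurgess_squarefree_general F r p hirr hass f hf
end
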